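/- arXiv:2311.08142 — 5 statements merged into one kernel-verified Lean document; each statement's English description precedes it below -/
import Mathlib

section
/- Let δ > 0 and s₁ ≤ s₂ be real numbers. Define m_δ(ξ) = iξ · 2|ξ|/(e^{2δ|ξ|} − 1) for ξ ≠ 0 and m_δ(0) = 0. Then there exists a constant C depending only on s₂ − s₁ such that for all ξ ∈ ℝ, (1+ξ²)^{s₂/2} |m_δ(ξ)| ≤ C δ^{-2}(1 + δ^{s₁−s₂}) (1+ξ²)^{s₁/2}. -/
/-!
Write `σ = s₂ - s₁` and `t = 2δ|ξ|`. The weight splits as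
`(1 + ξ²)^(s₂/2) = (1 + ξ²)^(σ/2) (1 + ξ²)^(s₁/2)` with `(1 + ξ²)^(σ/2) ≤ 2^σ (1 + |ξ|^σ)`, so it
suffices to bound `|ξ|^a |m_δ(ξ)| = 2 |ξ|^(2+a) / (e^t - 1)` for `a = 0` and `a = σ`. This is
`2 (2δ)^(-(2+a)) t^(2+a) / (e^t - 1) ≤ ⌈2 + a⌉! δ^(-(2+a))`, because `e^t - 1` dominates
`t^n / n!` for every `n ≥ 1`.
-/

open Real Complex

open scoped Nat

lemma pow_div_factorial_le_exp_sub_one {t : ℝ} (ht : 0 ≤ t) {n : ℕ} (hn : n ≠ 0) :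
    t ^ n / n ! ≤ Real.exp t - 1 := by
  obtain ⟨m, rfl⟩ := Nat.exists_eq_add_one_of_ne_zero hn
  have hsum := Real.sum_le_exp_of_nonneg ht (m + 2)
  rw [Finset.sum_range_succ, Finset.sum_range_succ'] at hsum
  have hrest : 0 ≤ ∑ i ∈ Finset.range m, t ^ (i + 1) / (i + 1)! := by positivity
  simp only [pow_zero, Nat.factorial_zero, Nat.cast_one, div_one] at hsum
  linarith

lemma rpow_le_factorial_ceil_mul_exp_sub_one {t a : ℝ} (ht : 0 ≤ t) (ha : 1 ≤ a) :
    t ^ a ≤ ⌈a⌉₊ ! * (Real.exp t - 1) := by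
  have hceil : ⌈a⌉₊ ≠ 0 := (Nat.ceil_pos.2 (by linarith)).ne'
  rcases le_total t 1 with ht1 | ht1
  · calc t ^ a ≤ t ^ (1 : ℝ) := rpow_le_rpow_of_exponent_ge' ht ht1 zero_le_one ha
      _ = t ^ 1 / (1 : ℕ)! := by simp
      _ ≤ Real.exp t - 1 := pow_div_factorial_le_exp_sub_one ht one_ne_zero
      _ ≤ ⌈a⌉₊ ! * (Real.exp t - 1) :=
        le_mul_of_one_le_left (sub_nonneg.2 (one_le_exp ht)) (mod_cast Nat.factorial_pos _)
  · calc t ^ a ≤ t ^ (⌈a⌉₊ : ℝ) := rpow_le_rpow_of_exponent_le ht1 (Nat.le_ceil a)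
      _ = ⌈a⌉₊ ! * (t ^ ⌈a⌉₊ / ⌈a⌉₊ !) := by
        rw [rpow_natCast, mul_div_cancel₀ _ (by positivity)]
      _ ≤ ⌈a⌉₊ ! * (Real.exp t - 1) := by
        gcongr; exact pow_div_factorial_le_exp_sub_one (by linarith) hceil

lemma one_add_rpow_le_two_rpow_mul {y p : ℝ} (hy : 0 ≤ y) (hp : 0 ≤ p) :
    (1 + y) ^ p ≤ 2 ^ p * (1 + y ^ p) := by
  rcases le_total y 1 with hy1 | hy1
  · calc (1 + y) ^ p ≤ 2 ^ p := by gcongr; linarith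
      _ ≤ 2 ^ p * (1 + y ^ p) := le_mul_of_one_le_right (by positivity) (by simp; positivity)
  · calc (1 + y) ^ p ≤ (2 * y) ^ p := by gcongr; linarith
      _ = 2 ^ p * y ^ p := mul_rpow zero_le_two hy
      _ ≤ 2 ^ p * (1 + y ^ p) := by gcongr; linarith

lemma one_add_sq_rpow_half_le {x σ : ℝ} (hx : 0 ≤ x) (hσ : 0 ≤ σ) :
    (1 + x ^ 2) ^ (σ / 2) ≤ 2 ^ σ * (1 + x ^ σ) := by
  calc (1 + x ^ 2) ^ (σ / 2) ≤ ((1 + x) ^ 2) ^ (σ / 2) := by gcongr; nlinarith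
    _ = (1 + x) ^ σ := by
      rw [← rpow_natCast, ← rpow_mul (by positivity)]; congr 1; ring
    _ ≤ 2 ^ σ * (1 + x ^ σ) := one_add_rpow_le_two_rpow_mul hx hσ

lemma rpow_mul_div_exp_sub_one_le {a δ x : ℝ} (ha : 0 ≤ a) (hδ : 0 < δ) (hx : 0 < x) :
    x ^ a * (2 * x ^ 2 / (Real.exp (2 * δ * x) - 1)) ≤ ⌈2 + a⌉₊ ! * δ ^ (-(2 + a)) := by
  have hE : 0 < Real.exp (2 * δ * x) - 1 := sub_pos.2 (Real.one_lt_exp_iff.2 (by positivity))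
  have hdom : 2 * x ^ (2 + a) * δ ^ (2 + a) ≤ ⌈2 + a⌉₊ ! * (Real.exp (2 * δ * x) - 1) := by
    have htwo : (2 : ℝ) ≤ 2 ^ (2 + a) := by
      simpa using rpow_le_rpow_of_exponent_le one_le_two (by linarith : (1 : ℝ) ≤ 2 + a)
    calc 2 * x ^ (2 + a) * δ ^ (2 + a) ≤ 2 ^ (2 + a) * (δ ^ (2 + a) * x ^ (2 + a)) := by
          rw [mul_right_comm, mul_assoc]; gcongr
      _ = (2 * δ * x) ^ (2 + a) := by
          rw [mul_rpow (by positivity) hx.le, mul_rpow zero_le_two hδ.le, mul_assoc]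
      _ ≤ ⌈2 + a⌉₊ ! * (Real.exp (2 * δ * x) - 1) :=
        rpow_le_factorial_ceil_mul_exp_sub_one (by positivity) (by linarith)
  rw [rpow_neg hδ.le, ← mul_div_assoc, ← div_eq_mul_inv,
    div_le_div_iff₀ hE (rpow_pos_of_pos hδ _)]
  calc x ^ a * (2 * x ^ 2) * δ ^ (2 + a) = 2 * x ^ (2 + a) * δ ^ (2 + a) := by
        rw [rpow_add hx, rpow_two]; ring
    _ ≤ _ := hdom

lemma one_add_sq_rpow_mul_div_exp_sub_one_le {σ δ x : ℝ} (hσ : 0 ≤ σ) (hδ : 0 < δ) (hx : 0 < x) :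
    (1 + x ^ 2) ^ (σ / 2) * (2 * x ^ 2 / (Real.exp (2 * δ * x) - 1)) ≤
      2 ^ σ * ⌈2 + σ⌉₊ ! * δ ^ (-2 : ℝ) * (1 + δ ^ (-σ)) := by
  set Q := 2 * x ^ 2 / (Real.exp (2 * δ * x) - 1)
  have hQ : 0 ≤ Q := div_nonneg (by positivity) (sub_nonneg.2 (Real.one_le_exp (by positivity)))
  have hlow : Q ≤ 2 * δ ^ (-2 : ℝ) := by
    simpa using rpow_mul_div_exp_sub_one_le le_rfl hδ hx
  have hhigh : x ^ σ * Q ≤ ⌈2 + σ⌉₊ ! * (δ ^ (-2 : ℝ) * δ ^ (-σ)) := by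
    rw [← rpow_add hδ, ← neg_add]; exact rpow_mul_div_exp_sub_one_le hσ hδ hx
  have hfact : (2 : ℝ) ≤ ⌈2 + σ⌉₊ ! := by
    have : 2 ≤ ⌈2 + σ⌉₊ := by simpa using Nat.ceil_mono (by linarith : (2 : ℝ) ≤ 2 + σ)
    exact_mod_cast this.trans (Nat.self_le_factorial _)
  calc (1 + x ^ 2) ^ (σ / 2) * Q ≤ 2 ^ σ * (1 + x ^ σ) * Q := by
        gcongr; exact one_add_sq_rpow_half_le hx.le hσ
    _ = 2 ^ σ * (Q + x ^ σ * Q) := by ring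
    _ ≤ 2 ^ σ * (⌈2 + σ⌉₊ ! * δ ^ (-2 : ℝ) + ⌈2 + σ⌉₊ ! * (δ ^ (-2 : ℝ) * δ ^ (-σ))) := by
        gcongr
        exact hlow.trans (by gcongr)
    _ = 2 ^ σ * ⌈2 + σ⌉₊ ! * δ ^ (-2 : ℝ) * (1 + δ ^ (-σ)) := by ring

theorem stmt_2 (s₁ s₂ : ℝ) (hs : s₁ ≤ s₂) :
    ∃ C : ℝ, 0 < C ∧ ∀ δ : ℝ, 0 < δ → ∀ ξ : ℝ,
      (1 + ξ ^ 2) ^ (s₂ / 2) *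
        ‖(if ξ = 0 then 0 else
          Complex.I * (ξ : ℂ) * ((2 * |ξ| / (Real.exp (2 * δ * |ξ|) - 1) : ℝ) : ℂ) : ℂ)‖
      ≤ C * δ ^ (-2 : ℝ) * (1 + δ ^ (s₁ - s₂)) * (1 + ξ ^ 2) ^ (s₁ / 2) := by
  set σ := s₂ - s₁
  refine ⟨2 ^ σ * ⌈2 + σ⌉₊ !, by positivity, fun δ hδ ξ => ?_⟩
  split_ifs with hξ
  · simp only [norm_zero, mul_zero]; positivity
  have hE : 0 < Real.exp (2 * δ * |ξ|) - 1 := sub_pos.2 (Real.one_lt_exp_iff.2 (by positivity))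
  have hnorm : ‖Complex.I * (ξ : ℂ) * ((2 * |ξ| / (Real.exp (2 * δ * |ξ|) - 1) : ℝ) : ℂ)‖ =
      2 * |ξ| ^ 2 / (Real.exp (2 * δ * |ξ|) - 1) := by
    rw [norm_mul, norm_mul, Complex.norm_I, Complex.norm_real, Complex.norm_real,
      Real.norm_of_nonneg (div_nonneg (by positivity) hE.le), Real.norm_eq_abs]
    ring
  have hweight : (1 + ξ ^ 2) ^ (s₂ / 2) = (1 + |ξ| ^ 2) ^ (σ / 2) * (1 + ξ ^ 2) ^ (s₁ / 2) := by
    rw [sq_abs, ← rpow_add (by positivity)]; congr 1; ring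
  rw [hnorm, hweight, show s₁ - s₂ = -σ by ring, mul_right_comm]
  exact mul_le_mul_of_nonneg_right
    (one_add_sq_rpow_mul_div_exp_sub_one_le (sub_nonneg.2 hs) hδ (abs_pos.2 hξ)) (by positivity)
end

section
/- Let a > 0 and 0 < aδ < π. For n, m ∈ ℤ with n ≠ m, define b_k(x) = 1/(cosh(a(x+k)) + cos(aδ)) and d_k(x) = b_k(x) sinh(a(x+k)). Then 2 b_n b_m = −[cos(aδ)/(sinh²(a(m−n)/2) + sin²(aδ))](b_n + b_m) + [coth(a(n−m)/2)/(sinh²(a(m−n)/2) + sin²(aδ))](d_n − d_m). -/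
/-! Write `u = w - h`, `v = w + h` and expand the hyperbolic functions of `u`, `v` by the addition
formulas. After clearing denominators the identity reduces to `cosh² - sinh² = 1` (for `w` and `h`)
and `sin² θ + cos² θ = 1`: the factor `sinh² h + sin² θ` in the denominators is exactly
`cosh² h - cos² θ`. -/

open Real

lemma cosh_add_cos_pos {θ : ℝ} (h0 : 0 < θ) (hπ : θ < π) (u : ℝ) : 0 < cosh u + cos θ := by
  have : cos π < cos θ := cos_lt_cos_of_nonneg_of_le_pi h0.le le_rfl hπ
  linarith [one_le_cosh u, cos_pi]

lemma two_mul_inv_cosh_add_cos_mul_inv (u v θ : ℝ) (hu : cosh u + cos θ ≠ 0)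
    (hv : cosh v + cos θ ≠ 0) (huv : u ≠ v) :
    2 * (1 / (cosh u + cos θ)) * (1 / (cosh v + cos θ)) =
      -(cos θ / (sinh ((v - u) / 2) ^ 2 + sin θ ^ 2))
          * (1 / (cosh u + cos θ) + 1 / (cosh v + cos θ))
      + (cosh ((u - v) / 2) / sinh ((u - v) / 2)) / (sinh ((v - u) / 2) ^ 2 + sin θ ^ 2)
          * (1 / (cosh u + cos θ) * sinh u - 1 / (cosh v + cos θ) * sinh v) := by
  obtain ⟨w, h, rfl, rfl⟩ : ∃ w h, u = w - h ∧ v = w + h :=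
    ⟨(u + v) / 2, (v - u) / 2, by ring, by ring⟩
  have hh : h ≠ 0 := by rintro rfl; simp at huv
  have hS : sinh h ≠ 0 := sinh_ne_zero.mpr hh
  have hden : sinh h ^ 2 + sin θ ^ 2 ≠ 0 := by positivity
  rw [show (w + h - (w - h)) / 2 = h by ring, show (w - h - (w + h)) / 2 = -h by ring,
    cosh_neg, sinh_neg]
  simp only [cosh_sub, cosh_add, sinh_sub, sinh_add] at hu hv ⊢
  field_simp
  linear_combination -(2 * cosh h ^ 2 * sinh h * cosh_sq_sub_sinh_sq w
    + 2 * sinh h * cosh_sq_sub_sinh_sq h - 2 * sinh h * sin_sq_add_cos_sq θ)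

theorem stmt_10 (a δ x : ℝ) (ha : 0 < a) (hδ : 0 < δ) (haδ : a * δ < π)
    (n m : ℤ) (hnm : n ≠ m) :
    let b : ℤ → ℝ := fun k => 1 / (Real.cosh (a * (x + k)) + Real.cos (a * δ))
    let d : ℤ → ℝ := fun k => b k * Real.sinh (a * (x + k))
    2 * b n * b m =
      -(Real.cos (a * δ) / (Real.sinh (a * (m - n) / 2) ^ 2 + Real.sin (a * δ) ^ 2))
          * (b n + b m)
      + (Real.cosh (a * (n - m) / 2) / Real.sinh (a * (n - m) / 2))
          / (Real.sinh (a * (m - n) / 2) ^ 2 + Real.sin (a * δ) ^ 2)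
          * (d n - d m) := by
  intro b d
  have hpos := cosh_add_cos_pos (mul_pos ha hδ) haδ
  have hshift : a * (x + n) ≠ a * (x + m) := by
    have : (n : ℝ) ≠ m := Int.cast_injective.ne hnm
    contrapose! this
    linarith [mul_left_cancel₀ ha.ne' this]
  have key := two_mul_inv_cosh_add_cos_mul_inv _ _ (a * δ) (hpos _).ne' (hpos _).ne' hshift
  rw [show (a * (x + m) - a * (x + n)) / 2 = a * (m - n) / 2 by ring,
    show (a * (x + n) - a * (x + m)) / 2 = a * (n - m) / 2 by ring] at key
  exact key
end

section
/- Let a > 0, 0 < aδ < π, x ∈ ℝ, and define d_k(x) = sinh(a(x+k))/(cosh(a(x+k)) + cos(aδ)). Then for each fixed nonzero integer ℓ, lim_{N→∞} ∑_{k=−N}^{N} (d_{k+ℓ}(x) − d_{k−ℓ}(x)) = 4ℓ. -/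
open Real Filter Finset Topology

/-! Each summand telescopes: `d (k + ℓ) - d (k - ℓ)` is a sum of `2ℓ` consecutive differences,
and after exchanging the two sums the whole expression becomes
`∑ j < 2ℓ, (d (N + 1 - ℓ + j) - d (-N - ℓ + j))`, a fixed number of terms each tending to
`d (+∞) - d (-∞) = 1 - (-1)`. These limits of `sinh u / (cosh u + c)` hold for every constant
`c`, because `sinh u / (cosh u + c) = 1 - (exp (-u) + c) / (cosh u + c)` once the denominator
is positive. -/

section Telescoping

variable {E : Type*} [AddCommGroup E]

theorem Int.Icc_neg_natCast_eq_map_range (N : ℕ) :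
    Icc (-(N : ℤ)) N =
      (Finset.range (2 * N + 1)).map (Nat.castEmbedding.trans (addLeftEmbedding (-(N : ℤ)))) := by
  ext k
  simp only [mem_Icc, Finset.mem_map, Finset.mem_range, Function.Embedding.trans_apply,
    Nat.castEmbedding_apply, addLeftEmbedding_apply]
  constructor
  · rintro ⟨hk₁, hk₂⟩
    exact ⟨(k + N).toNat, by omega, by omega⟩
  · rintro ⟨i, hi, rfl⟩
    omega

theorem sum_Icc_neg_natCast_sub (g : ℤ → E) (N : ℕ) :
    ∑ k ∈ Icc (-(N : ℤ)) N, (g (k + 1) - g k) = g (N + 1) - g (-N) := by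
  rw [Int.Icc_neg_natCast_eq_map_range, sum_map]
  simp only [Function.Embedding.trans_apply, Nat.castEmbedding_apply, addLeftEmbedding_apply]
  have h := sum_range_sub (fun i : ℕ => g (-N + i)) (2 * N + 1)
  push_cast at h
  convert h using 3 <;> ring_nf

theorem sum_Icc_sub_shift_eq (d : ℤ → E) (N ℓ : ℕ) :
    ∑ k ∈ Icc (-(N : ℤ)) N, (d (k + ℓ) - d (k - ℓ)) =
      ∑ j ∈ Finset.range (2 * ℓ), (d (N + 1 - ℓ + j) - d (-N - ℓ + j)) := by
  calc ∑ k ∈ Icc (-(N : ℤ)) N, (d (k + ℓ) - d (k - ℓ))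
      = ∑ k ∈ Icc (-(N : ℤ)) N, ∑ j ∈ Finset.range (2 * ℓ),
          (d (k - ℓ + (j + 1)) - d (k - ℓ + j)) := by
        refine sum_congr rfl fun k _ => ?_
        have h := sum_range_sub (fun j : ℕ => d (k - ℓ + j)) (2 * ℓ)
        push_cast at h
        rw [h]
        ring_nf
    _ = ∑ j ∈ Finset.range (2 * ℓ), (d (N + 1 - ℓ + j) - d (-N - ℓ + j)) := by
        rw [sum_comm]
        refine sum_congr rfl fun j _ => ?_
        convert sum_Icc_neg_natCast_sub (fun k => d (k - ℓ + j)) N using 3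
        ring_nf

variable [TopologicalSpace E] [IsTopologicalAddGroup E] {d : ℤ → E} {p m : E}

theorem tendsto_sum_Icc_sub_shift_natCast (hp : Tendsto d atTop (𝓝 p))
    (hm : Tendsto d atBot (𝓝 m)) (ℓ : ℕ) :
    Tendsto (fun N : ℕ => ∑ k ∈ Icc (-(N : ℤ)) N, (d (k + ℓ) - d (k - ℓ)))
      atTop (𝓝 ((2 * ℓ) • (p - m))) := by
  have hsum : (2 * ℓ) • (p - m) = ∑ _j ∈ Finset.range (2 * ℓ), (p - m) := by
    rw [sum_const, card_range]
  simp_rw [sum_Icc_sub_shift_eq, hsum]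
  refine tendsto_finsetSum _ fun j _ => (hp.comp ?_).sub (hm.comp ?_)
  · exact tendsto_atTop_atTop.2 fun b => ⟨(b + ℓ).toNat, fun N hN => by omega⟩
  · exact tendsto_atTop_atBot.2 fun b => ⟨(j - b).toNat, fun N hN => by omega⟩

theorem tendsto_sum_Icc_sub_shift (hp : Tendsto d atTop (𝓝 p))
    (hm : Tendsto d atBot (𝓝 m)) (ℓ : ℤ) :
    Tendsto (fun N : ℕ => ∑ k ∈ Icc (-(N : ℤ)) N, (d (k + ℓ) - d (k - ℓ)))
      atTop (𝓝 ((2 * ℓ) • (p - m))) := by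
  obtain ⟨n, rfl | rfl⟩ := ℓ.eq_nat_or_neg
  · exact_mod_cast tendsto_sum_Icc_sub_shift_natCast hp hm n
  · convert (tendsto_sum_Icc_sub_shift_natCast hp hm n).neg using 2
    · rw [← sum_neg_distrib]
      simp only [sub_neg_eq_add, ← sub_eq_add_neg, neg_sub]
    · rw [mul_neg, neg_zsmul]
      norm_cast

end Telescoping

theorem tendsto_sinh_div_cosh_add_const_atTop (c : ℝ) :
    Tendsto (fun u => sinh u / (cosh u + c)) atTop (𝓝 1) := by
  have hcosh : Tendsto cosh atTop atTop :=
    tendsto_atTop_mono (fun u => by rw [cosh_eq]; linarith [exp_pos (-u)])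
      (tendsto_exp_atTop.atTop_div_const two_pos)
  have hden := tendsto_atTop_add_const_right _ c hcosh
  have hrem := ((tendsto_exp_neg_atTop_nhds_zero.add_const c).div_atTop hden).const_sub 1
  rw [sub_zero] at hrem
  refine hrem.congr' ?_
  filter_upwards [hden.eventually_gt_atTop 0] with u hu
  field_simp
  linarith [cosh_sub_sinh u]

theorem tendsto_sinh_div_cosh_add_const_atBot (c : ℝ) :
    Tendsto (fun u => sinh u / (cosh u + c)) atBot (𝓝 (-1)) := by
  simpa [Function.comp_def, neg_div] using
    ((tendsto_sinh_div_cosh_add_const_atTop c).comp tendsto_neg_atBot_atTop).neg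

theorem stmt_11_general (a δ x : ℝ) (ha : 0 < a)
    (ℓ : ℤ) :
    let d : ℤ → ℝ := fun k =>
      Real.sinh (a * (x + k)) / (Real.cosh (a * (x + k)) + Real.cos (a * δ))
    Tendsto (fun N : ℕ => ∑ k ∈ Finset.Icc (-(N : ℤ)) (N : ℤ), (d (k + ℓ) - d (k - ℓ)))
      atTop (nhds (4 * ℓ)) := by
  intro d
  have hd_top : Tendsto d atTop (𝓝 1) :=
    (tendsto_sinh_div_cosh_add_const_atTop _).comp
      ((tendsto_atTop_add_const_left _ x tendsto_intCast_atTop_atTop).const_mul_atTop ha)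
  have hd_bot : Tendsto d atBot (𝓝 (-1)) :=
    (tendsto_sinh_div_cosh_add_const_atBot _).comp
      ((tendsto_atBot_add_const_left _ x
        (tendsto_intCast_atBot_iff.2 tendsto_id)).const_mul_atBot ha)
  convert tendsto_sum_Icc_sub_shift hd_top hd_bot ℓ using 2
  rw [zsmul_eq_mul]
  push_cast
  ring

theorem stmt_11 (a δ x : ℝ) (ha : 0 < a) (hδ : 0 < δ) (haδ : a * δ < π)
    (ℓ : ℤ) (hℓ : ℓ ≠ 0) :
    let d : ℤ → ℝ := fun k =>
      Real.sinh (a * (x + k)) / (Real.cosh (a * (x + k)) + Real.cos (a * δ))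
    Tendsto (fun N : ℕ => ∑ k ∈ Finset.Icc (-(N : ℤ)) (N : ℤ), (d (k + ℓ) - d (k - ℓ)))
      atTop (nhds (4 * ℓ)) :=
  stmt_11_general a δ x ha ℓ
end

section
/- Let δ > 0, and for a ∈ (0, π/δ) define c(a) = δ^{−1} − a cot(aδ) − ∑_{ℓ=1}^∞ a sin(2aδ)/(sinh²(aℓ/2) + sin²(aδ)). Then the series converges for every a ∈ (0, π/δ), and c(a) → ∞ as a → π/δ from below. -/
open Real Filter

lemma aux_sumsq : Summable (fun ℓ : ℕ => 1 / ((ℓ : ℝ) + 1) ^ 2) := by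
  have h : Summable (fun n : ℕ => 1 / (n : ℝ) ^ 2) :=
    Real.summable_one_div_nat_pow.mpr (by norm_num)
  have := (summable_nat_add_iff 1).mpr h
  simpa using this

lemma aux_bound (a δ' : ℝ) (ha : 0 < a) (ℓ : ℕ) :
    |a * Real.sin (2 * a * δ') /
        (Real.sinh (a * (ℓ + 1) / 2) ^ 2 + Real.sin (a * δ') ^ 2)| ≤
      4 / a * (1 / ((ℓ : ℝ) + 1) ^ 2) := by
  set x : ℝ := a * (ℓ + 1) / 2 with hxdef
  have hx : 0 < x := by positivity
  have hs : x ≤ Real.sinh x := Real.self_le_sinh_iff.mpr hx.le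
  have hD : x ^ 2 ≤ Real.sinh x ^ 2 + Real.sin (a * δ') ^ 2 :=
    le_add_of_le_of_nonneg (by nlinarith [sq_nonneg (Real.sinh x - x)]) (sq_nonneg _)
  have hDpos : 0 < Real.sinh x ^ 2 + Real.sin (a * δ') ^ 2 :=
    lt_of_lt_of_le (by positivity) hD
  have hnum : |a * Real.sin (2 * a * δ')| ≤ a := by
    rw [abs_mul, abs_of_pos ha]
    nlinarith [abs_nonneg (Real.sin (2 * a * δ')), Real.abs_sin_le_one (2 * a * δ')]
  rw [abs_div, abs_of_pos hDpos]
  have h1 : |a * Real.sin (2 * a * δ')| / (Real.sinh x ^ 2 + Real.sin (a * δ') ^ 2)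
      ≤ a / x ^ 2 :=
    div_le_div₀ ha.le hnum (by positivity) hD
  refine h1.trans_eq ?_
  have hl : (0:ℝ) < (ℓ : ℝ) + 1 := by positivity
  rw [hxdef]
  field_simp
  ring

set_option maxHeartbeats 1000000 in
theorem stmt_14 (δ : ℝ) (hδ : 0 < δ) :
    (∀ a ∈ Set.Ioo 0 (π / δ), Summable (fun ℓ : ℕ =>
        a * Real.sin (2 * a * δ) /
          (Real.sinh (a * (ℓ + 1) / 2) ^ 2 + Real.sin (a * δ) ^ 2))) ∧
    Tendsto (fun a : ℝ =>
        δ⁻¹ - a * (Real.cos (a * δ) / Real.sin (a * δ)) -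
          ∑' ℓ : ℕ, a * Real.sin (2 * a * δ) /
            (Real.sinh (a * (ℓ + 1) / 2) ^ 2 + Real.sin (a * δ) ^ 2))
      (nhdsWithin (π / δ) (Set.Ioo 0 (π / δ))) atTop := by
  have hsum : ∀ a ∈ Set.Ioo 0 (π / δ), Summable (fun ℓ : ℕ =>
      a * Real.sin (2 * a * δ) /
        (Real.sinh (a * (ℓ + 1) / 2) ^ 2 + Real.sin (a * δ) ^ 2)) := by
    intro a ha
    refine Summable.of_abs (Summable.of_nonneg_of_le (fun ℓ => abs_nonneg _)
      (fun ℓ => aux_bound a δ ha.1 ℓ) (aux_sumsq.mul_left _))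
  refine ⟨hsum, ?_⟩
  set L := nhdsWithin (π / δ) (Set.Ioo 0 (π / δ)) with hL
  have hπδ : 0 < π / δ := div_pos Real.pi_pos hδ
  -- eventually a is in Ioo and a > π/(2δ)
  have hmem : ∀ᶠ a in L, a ∈ Set.Ioo 0 (π / δ) := self_mem_nhdsWithin
  have hhalf : ∀ᶠ a in L, π / (2 * δ) < a := by
    apply eventually_nhdsWithin_of_eventually_nhds
    have : π / (2 * δ) < π / δ := by
      rw [div_lt_div_iff₀ (by positivity) hδ]; nlinarith [Real.pi_pos]
    exact eventually_gt_nhds this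
  -- sin (a δ) tends to 0 within positives
  have hsin : Tendsto (fun a : ℝ => Real.sin (a * δ)) L (nhdsWithin 0 (Set.Ioi 0)) := by
    rw [tendsto_nhdsWithin_iff]
    constructor
    · have hc : Tendsto (fun a : ℝ => Real.sin (a * δ)) (nhds (π / δ)) (nhds (Real.sin (π / δ * δ))) :=
        (Real.continuous_sin.comp (continuous_id.mul continuous_const)).tendsto _
      rw [div_mul_cancel₀ _ hδ.ne', Real.sin_pi] at hc
      exact hc.mono_left nhdsWithin_le_nhds
    · filter_upwards [hmem] with a ha
      have haδ : 0 < a * δ := mul_pos ha.1 hδ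
      have haδ' : a * δ < π := by
        rw [← lt_div_iff₀ hδ]; exact ha.2
      exact Real.sin_pos_of_pos_of_lt_pi haδ haδ'
  -- the cot term tends to atTop
  have hcot : Tendsto (fun a : ℝ => -(a * (Real.cos (a * δ) / Real.sin (a * δ)))) L atTop := by
    have h1 : Tendsto (fun a : ℝ => -(a * Real.cos (a * δ))) L (nhds (π / δ)) := by
      have hc : Tendsto (fun a : ℝ => -(a * Real.cos (a * δ))) (nhds (π / δ))
          (nhds (-(π / δ * Real.cos (π / δ * δ)))) := by
        exact ((continuous_id.mul (Real.continuous_cos.comp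
          (continuous_id.mul continuous_const))).neg).tendsto _
      rw [div_mul_cancel₀ _ hδ.ne', Real.cos_pi] at hc
      simpa using hc.mono_left nhdsWithin_le_nhds
    have h2 : Tendsto (fun a : ℝ => (Real.sin (a * δ))⁻¹) L atTop :=
      tendsto_inv_nhdsGT_zero.comp hsin
    have := Filter.Tendsto.pos_mul_atTop hπδ h1 h2
    refine this.congr fun a => by ring
  -- bound on the series
  set T := ∑' ℓ : ℕ, 1 / ((ℓ : ℝ) + 1) ^ 2 with hT
  have hbound : ∀ᶠ a in L,
      δ⁻¹ - a * (Real.cos (a * δ) / Real.sin (a * δ)) -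
          ∑' ℓ : ℕ, a * Real.sin (2 * a * δ) /
            (Real.sinh (a * (ℓ + 1) / 2) ^ 2 + Real.sin (a * δ) ^ 2)
        ≥ (δ⁻¹ - 8 * δ / π * T) + -(a * (Real.cos (a * δ) / Real.sin (a * δ))) := by
    filter_upwards [hmem, hhalf] with a ha ha2
    have ha0 := ha.1
    have hfs : Summable (fun ℓ : ℕ => |a * Real.sin (2 * a * δ) /
        (Real.sinh (a * (ℓ + 1) / 2) ^ 2 + Real.sin (a * δ) ^ 2)|) :=
      Summable.of_nonneg_of_le (fun ℓ => abs_nonneg _)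
        (fun ℓ => aux_bound a δ ha0 ℓ) (aux_sumsq.mul_left _)
    have habs : |∑' ℓ : ℕ, a * Real.sin (2 * a * δ) /
        (Real.sinh (a * (ℓ + 1) / 2) ^ 2 + Real.sin (a * δ) ^ 2)| ≤ 8 * δ / π * T := by
      calc |∑' ℓ : ℕ, a * Real.sin (2 * a * δ) /
            (Real.sinh (a * (ℓ + 1) / 2) ^ 2 + Real.sin (a * δ) ^ 2)|
          ≤ ∑' ℓ : ℕ, |a * Real.sin (2 * a * δ) /
            (Real.sinh (a * (ℓ + 1) / 2) ^ 2 + Real.sin (a * δ) ^ 2)| := by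
            have h := norm_tsum_le_tsum_norm (f := fun ℓ : ℕ => a * Real.sin (2 * a * δ) /
              (Real.sinh (a * (ℓ + 1) / 2) ^ 2 + Real.sin (a * δ) ^ 2))
              (by simpa only [Real.norm_eq_abs] using hfs)
            simpa only [Real.norm_eq_abs] using h
        _ ≤ ∑' ℓ : ℕ, 8 * δ / π * (1 / ((ℓ : ℝ) + 1) ^ 2) := by
            refine Summable.tsum_le_tsum (fun ℓ => ?_) hfs (aux_sumsq.mul_left _)
            refine (aux_bound a δ ha0 ℓ).trans ?_
            have h4a : 4 / a ≤ 8 * δ / π := by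
              rw [div_le_div_iff₀ ha0 Real.pi_pos]
              have h2 : π < 2 * δ * a := by
                have := (div_lt_iff₀ (by positivity : (0:ℝ) < 2 * δ)).mp ha2
                linarith
              nlinarith [Real.pi_pos]
            exact mul_le_mul_of_nonneg_right h4a (by positivity)
        _ = 8 * δ / π * T := by rw [hT, tsum_mul_left]
    have hSle : ∑' ℓ : ℕ, a * Real.sin (2 * a * δ) /
        (Real.sinh (a * (ℓ + 1) / 2) ^ 2 + Real.sin (a * δ) ^ 2) ≤ 8 * δ / π * T :=
      (le_abs_self _).trans habs
    linarith
  have hg : Tendsto (fun a : ℝ => (δ⁻¹ - 8 * δ / π * T) +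
      -(a * (Real.cos (a * δ) / Real.sin (a * δ)))) L atTop :=
    tendsto_atTop_add_const_left _ _ hcot
  exact tendsto_atTop_mono' L hbound hg
end

section
/- Let δ > 0, a ∈ (0, π/δ), and let u_c(t,x) = −a sin(aδ)/(cosh(a(x−ct)) + cos(aδ)) with c > 0. Then for every test function ψ ∈ C_c^∞(ℝ) and every fixed t ≠ 0, ∫_ℝ u_c(t,x) ψ(x) dx = ∫_ℝ (−sin(aδ)/(cosh(y) + cos(aδ))) ψ(y/a + ct) dy, and this tends to 0 as c → ∞ along the family with a = a(c) the solution of aδ cot(aδ) = 1 − cδ (so that a → π/δ). -/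
open Real Filter MeasureTheory

/-- Change of variables `y = a (x - s)` for the traveling-wave integral. -/
lemma ilw_cov (a s : ℝ) (ha : 0 < a) (f g : ℝ → ℝ) :
    (∫ x : ℝ, a * f (a * (x - s)) * g x) = ∫ y : ℝ, f y * g (y / a + s) := by
  have h1 : (∫ x : ℝ, a * f (a * (x - s)) * g x)
      = ∫ z : ℝ, a * f (a * z) * g (z + s) := by
    have := integral_sub_right_eq_self (μ := volume)
      (fun z => a * f (a * z) * g (z + s)) s
    simp only [sub_add_cancel] at this
    exact this
  have h2 : (∫ z : ℝ, a * f (a * z) * g (z + s))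
      = |a⁻¹| • ∫ y : ℝ, a * f y * g (y / a + s) := by
    have := MeasureTheory.Measure.integral_comp_mul_left
      (fun y => a * f y * g (y / a + s)) a
    simp only [mul_div_cancel_left₀ _ (ne_of_gt ha)] at this
    exact this
  rw [h1, h2, smul_eq_mul, abs_of_pos (inv_pos.mpr ha)]
  simp_rw [mul_assoc]
  rw [integral_const_mul, inv_mul_cancel_left₀ (ne_of_gt ha)]

/-- For `c > 1/δ` the defining equation forces `a δ > π/2`. -/
lemma ilw_half (δ c a : ℝ) (hδ : 0 < δ) (hc : 1 / δ < c)
    (ha : a ∈ Set.Ioo 0 (π / δ))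
    (heq : a * δ * (Real.cos (a * δ) / Real.sin (a * δ)) = 1 - c * δ) :
    π / 2 < a * δ := by
  have hβ0 : 0 < a * δ := mul_pos ha.1 hδ
  have hβπ : a * δ < π := (lt_div_iff₀ hδ).mp ha.2
  by_contra h
  push_neg at h
  have hcos : 0 ≤ Real.cos (a * δ) :=
    Real.cos_nonneg_of_mem_Icc ⟨by linarith [Real.pi_pos], h⟩
  have hsin : 0 < Real.sin (a * δ) := Real.sin_pos_of_pos_of_lt_pi hβ0 hβπ
  have hnn : 0 ≤ a * δ * (Real.cos (a * δ) / Real.sin (a * δ)) :=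
    mul_nonneg hβ0.le (div_nonneg hcos hsin.le)
  have hcδ : 1 < c * δ := (div_lt_iff₀ hδ).mp hc
  linarith [heq ▸ hnn]

lemma ilw_exp_bound (y : ℝ) (hy : 1 ≤ |y|) :
    Real.exp |y| / 8 ≤ Real.cosh y - 1 := by
  have h1 : Real.cosh y = (Real.exp |y| + Real.exp (-|y|)) / 2 := by
    rw [← Real.cosh_abs, Real.cosh_eq]
  have h2 : Real.exp 1 ≤ Real.exp |y| := Real.exp_le_exp.mpr hy
  have h3 : (2.7182818283 : ℝ) < Real.exp 1 := Real.exp_one_gt_d9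
  have h4 : 0 < Real.exp (-|y|) := Real.exp_pos _
  -- 1 ≤ (3/8) * exp |y|
  have h5 : (1 : ℝ) ≤ 3 / 8 * Real.exp |y| := by nlinarith
  nlinarith

lemma ilw_integrable_exp_neg_abs : Integrable fun y : ℝ => Real.exp (-|y|) := by
  have hmeas : AEStronglyMeasurable (fun y : ℝ => Real.exp (-|y|)) volume :=
    (Real.continuous_exp.comp continuous_abs.neg).aestronglyMeasurable
  refine (integrable_inv_one_add_sq.const_mul 4).mono' hmeas ?_
  filter_upwards with y
  have h1 : (1 + y ^ 2) / 4 ≤ Real.exp |y| := by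
    have h2 : 1 + |y| / 2 ≤ Real.exp (|y| / 2) := by
      have := Real.add_one_le_exp (|y| / 2); linarith
    have h3 : Real.exp (|y| / 2) ^ 2 = Real.exp |y| := by
      rw [sq, ← Real.exp_add, add_halves]
    have h4 : 0 ≤ 1 + |y| / 2 := by positivity
    have h5 : (1 + |y| / 2) ^ 2 ≤ Real.exp |y| := by
      rw [← h3]; exact pow_le_pow_left₀ h4 h2 2
    have h6 : |y| ^ 2 = y ^ 2 := sq_abs y
    nlinarith [abs_nonneg y]
  have hpos : (0 : ℝ) < 1 + y ^ 2 := by positivity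
  rw [Real.norm_eq_abs, abs_of_pos (Real.exp_pos _), Real.exp_neg]
  rw [show (4 : ℝ) * (1 + y ^ 2)⁻¹ = ((1 + y ^ 2) / 4)⁻¹ by
    field_simp]
  exact inv_anti₀ (by positivity) h1

theorem stmt_19 (δ t : ℝ) (hδ : 0 < δ) (ht : t ≠ 0)
    (ψ : ℝ → ℝ) (hψ : ContDiff ℝ (⊤ : ℕ∞) ψ) (hsupp : HasCompactSupport ψ)
    (A : ℝ → ℝ)
    (hA : ∀ c : ℝ, 0 < c → A c ∈ Set.Ioo 0 (π / δ) ∧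
      A c * δ * (Real.cos (A c * δ) / Real.sin (A c * δ)) = 1 - c * δ) :
    (∀ c : ℝ, 0 < c → ∀ a ∈ Set.Ioo (0 : ℝ) (π / δ),
      (∫ x : ℝ, (-a * Real.sin (a * δ) /
          (Real.cosh (a * (x - c * t)) + Real.cos (a * δ))) * ψ x)
        = ∫ y : ℝ, (-Real.sin (a * δ) / (Real.cosh y + Real.cos (a * δ)))
            * ψ (y / a + c * t)) ∧
    Tendsto (fun c : ℝ =>
        ∫ x : ℝ, (-(A c) * Real.sin (A c * δ) /
          (Real.cosh (A c * (x - c * t)) + Real.cos (A c * δ))) * ψ x)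
      atTop (nhds 0) := by
  have ht' : 0 < |t| := abs_pos.mpr ht
  -- Part 1: change of variables
  have part1 : ∀ c : ℝ, 0 < c → ∀ a ∈ Set.Ioo (0 : ℝ) (π / δ),
      (∫ x : ℝ, (-a * Real.sin (a * δ) /
          (Real.cosh (a * (x - c * t)) + Real.cos (a * δ))) * ψ x)
        = ∫ y : ℝ, (-Real.sin (a * δ) / (Real.cosh y + Real.cos (a * δ)))
            * ψ (y / a + c * t) := by
    intro c _ a ha
    have key := ilw_cov a (c * t) ha.1
      (fun y => -Real.sin (a * δ) / (Real.cosh y + Real.cos (a * δ))) ψ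
    have : (∫ x : ℝ, (-a * Real.sin (a * δ) /
          (Real.cosh (a * (x - c * t)) + Real.cos (a * δ))) * ψ x)
        = ∫ x : ℝ, a * (-Real.sin (a * δ) /
          (Real.cosh (a * (x - c * t)) + Real.cos (a * δ))) * ψ x := by
      congr 1; funext x; ring
    rw [this, key]
  refine ⟨part1, ?_⟩
  -- Part 2
  obtain ⟨R, hR0, hRψ⟩ := hsupp.exists_pos_le_norm
  obtain ⟨C, hC⟩ := hsupp.exists_bound_of_continuous hψ.continuous
  have hC0 : 0 ≤ C := le_trans (norm_nonneg (ψ 0)) (hC 0)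
  set F : ℝ → ℝ → ℝ := fun c y =>
    (-Real.sin (A c * δ) / (Real.cosh y + Real.cos (A c * δ)))
      * ψ (y / A c + c * t) with hF
  -- basic facts for c > 0
  have basic : ∀ c : ℝ, 0 < c →
      0 < A c ∧ 0 < A c * δ ∧ A c * δ < π ∧ 0 < Real.sin (A c * δ) ∧
        (-1 : ℝ) < Real.cos (A c * δ) := by
    intro c hc
    obtain ⟨⟨h1, h2⟩, -⟩ := hA c hc
    have hβ0 : 0 < A c * δ := mul_pos h1 hδ
    have hβπ : A c * δ < π := (lt_div_iff₀ hδ).mp h2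
    refine ⟨h1, hβ0, hβπ, Real.sin_pos_of_pos_of_lt_pi hβ0 hβπ, ?_⟩
    have := Real.cos_lt_cos_of_nonneg_of_le_pi hβ0.le le_rfl hβπ
    rwa [Real.cos_pi] at this
  -- lower bound on A c for large c
  have halfA : ∀ c : ℝ, 1 / δ < c → 0 < c → π / (2 * δ) ≤ A c := by
    intro c hc hc0
    obtain ⟨h1, h2⟩ := hA c hc0
    have := ilw_half δ c (A c) hδ hc h1 h2
    rw [show π / (2 * δ) = π / 2 / δ by ring]
    rw [div_le_iff₀ hδ]
    linarith
  have hπδ : 0 < π / (2 * δ) := by positivity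
  -- denominators are positive
  have hden : ∀ c : ℝ, 0 < c → ∀ y : ℝ,
      0 < Real.cosh y + Real.cos (A c * δ) := by
    intro c hc y
    have h1 := (basic c hc).2.2.2.2
    have h2 : 1 ≤ Real.cosh y := Real.one_le_cosh y
    linarith
  -- the y-integral tends to zero, by dominated convergence
  have main : Tendsto (fun c : ℝ => ∫ y : ℝ, F c y) atTop (nhds 0) := by
    have h0 : (0 : ℝ) = ∫ _ : ℝ, (0 : ℝ) := by simp
    rw [h0]
    apply tendsto_integral_filter_of_dominated_convergence
      (bound := fun y : ℝ => 8 * C * Real.exp (-|y|))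
    · -- measurability
      filter_upwards [eventually_gt_atTop (0 : ℝ)] with c hc
      have hcont : Continuous (F c) := by
        apply Continuous.mul
        · exact continuous_const.div
            (Real.continuous_cosh.add continuous_const)
            (fun y => (hden c hc y).ne')
        · exact hψ.continuous.comp
            ((continuous_id.div_const _).add continuous_const)
      exact hcont.aestronglyMeasurable
    · -- domination
      filter_upwards [eventually_gt_atTop (1 / δ),
        eventually_ge_atTop ((R + 2 * δ / π) / |t|),
        eventually_gt_atTop (0 : ℝ)] with c hc1 hc2 hc0
      refine Filter.Eventually.of_forall fun y => ?_
      obtain ⟨hA0, hβ0, hβπ, hsin, hcos⟩ := basic c hc0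
      have hbpos : 0 ≤ 8 * C * Real.exp (-|y|) := by positivity
      by_cases hz : ψ (y / A c + c * t) = 0
      · rw [hF]; simp only [hz, mul_zero, norm_zero]; exact hbpos
      · -- support forces |y| ≥ 1
        have hlt : |y / A c + c * t| < R := by
          by_contra hcon
          push_neg at hcon
          exact hz (hRψ _ (by rwa [Real.norm_eq_abs]))
        have hha : π / (2 * δ) ≤ A c := halfA c hc1 hc0
        have hct : R + 2 * δ / π ≤ c * |t| :=
          (div_le_iff₀ ht').mp hc2
        have habs : |c * t| = c * |t| := by
          rw [abs_mul, abs_of_pos hc0]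
        have hya : 2 * δ / π ≤ |y / A c| := by
          have : c * |t| ≤ |y / A c + c * t| + |y / A c| := by
            have := abs_sub_abs_le_abs_sub (c * t) (-(y / A c))
            have h := abs_add_le (y / A c) (c * t)
            calc c * |t| = |c * t| := habs.symm
              _ ≤ |y / A c + c * t| + |y / A c| := by
                  have := abs_add_le (-(y / A c)) (y / A c + c * t)
                  simp only [neg_add_cancel_left, abs_neg] at this
                  linarith
          linarith
        have hy1 : 1 ≤ |y| := by
          have : |y| = A c * |y / A c| := by
            rw [abs_div, abs_of_pos hA0]
            field_simp
          rw [this]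
          calc (1 : ℝ) = π / (2 * δ) * (2 * δ / π) := by
                field_simp
            _ ≤ A c * |y / A c| :=
                mul_le_mul hha hya (by positivity) hA0.le
        -- exponential bound
        have hd8 : Real.exp |y| / 8 ≤ Real.cosh y + Real.cos (A c * δ) := by
          have := ilw_exp_bound y hy1
          linarith
        have hdpos : 0 < Real.cosh y + Real.cos (A c * δ) := hden c hc0 y
        have hnorm : ‖F c y‖
            = Real.sin (A c * δ) / (Real.cosh y + Real.cos (A c * δ))
              * |ψ (y / A c + c * t)| := by
          rw [hF, Real.norm_eq_abs, abs_mul, abs_div, abs_neg,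
            abs_of_pos hsin, abs_of_pos hdpos]
        rw [hnorm]
        have hs1 : Real.sin (A c * δ) ≤ 1 := Real.sin_le_one _
        have hfrac : Real.sin (A c * δ) / (Real.cosh y + Real.cos (A c * δ))
            ≤ 8 * Real.exp (-|y|) := by
          have h1 : Real.sin (A c * δ) / (Real.cosh y + Real.cos (A c * δ))
              ≤ 1 / (Real.exp |y| / 8) :=
            div_le_div₀ zero_le_one hs1 (by positivity) hd8
          calc Real.sin (A c * δ) / (Real.cosh y + Real.cos (A c * δ))
              ≤ 1 / (Real.exp |y| / 8) := h1
            _ = 8 * Real.exp (-|y|) := by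
                rw [Real.exp_neg]; field_simp
        calc Real.sin (A c * δ) / (Real.cosh y + Real.cos (A c * δ))
              * |ψ (y / A c + c * t)|
            ≤ 8 * Real.exp (-|y|) * C := by
              apply mul_le_mul hfrac ?_ (abs_nonneg _) (by positivity)
              exact (Real.norm_eq_abs _ ▸ hC _)
          _ = 8 * C * Real.exp (-|y|) := by ring
    · -- integrable bound
      exact (ilw_integrable_exp_neg_abs.const_mul (8 * C))
    · -- pointwise limit
      refine Filter.Eventually.of_forall fun y => ?_
      have hev : ∀ᶠ c : ℝ in atTop, F c y = 0 := by
        filter_upwards [eventually_gt_atTop (1 / δ),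
          eventually_ge_atTop ((R + |y| * (2 * δ / π)) / |t|),
          eventually_gt_atTop (0 : ℝ)] with c hc1 hc2 hc0
        obtain ⟨hA0, -, -, -, -⟩ := basic c hc0
        have hha : π / (2 * δ) ≤ A c := halfA c hc1 hc0
        have hct : R + |y| * (2 * δ / π) ≤ c * |t| :=
          (div_le_iff₀ ht').mp hc2
        have hinva : 1 / A c ≤ 2 * δ / π := by
          rw [div_le_iff₀ hA0, ← div_le_iff₀' (by positivity : (0:ℝ) < 2 * δ / π)]
          calc 1 / (2 * δ / π) = π / (2 * δ) := by field_simp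
            _ ≤ A c := hha
        have hyb : |y / A c| ≤ |y| * (2 * δ / π) := by
          rw [abs_div, abs_of_pos hA0, div_eq_mul_one_div]
          exact mul_le_mul_of_nonneg_left hinva (abs_nonneg y)
        have hbig : R ≤ |y / A c + c * t| := by
          have habs : |c * t| = c * |t| := by
            rw [abs_mul, abs_of_pos hc0]
          have h := abs_sub_abs_le_abs_sub (c * t) (-(y / A c))
          have h2 : |c * t| - |y / A c| ≤ |y / A c + c * t| := by
            have := abs_add_le (-(y / A c)) (y / A c + c * t)
            simp only [neg_add_cancel_left, abs_neg] at this
            linarith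
          rw [habs] at h2
          linarith
        have hz : ψ (y / A c + c * t) = 0 :=
          hRψ _ (by rwa [Real.norm_eq_abs])
        rw [hF]; simp [hz]
      exact Tendsto.congr' (hev.mono fun c h => h.symm) tendsto_const_nhds
  -- transfer back to the x-integral
  have heq : ∀ᶠ c : ℝ in atTop,
      (∫ y : ℝ, F c y)
        = ∫ x : ℝ, (-(A c) * Real.sin (A c * δ) /
            (Real.cosh (A c * (x - c * t)) + Real.cos (A c * δ))) * ψ x := by
    filter_upwards [eventually_gt_atTop (0 : ℝ)] with c hc
    exact (part1 c hc (A c) (hA c hc).1).symm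
  exact Tendsto.congr' heq main
end
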